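/- For the spider walk on SP(N) as above, for integers i, j ≥ 1 with i + j ≤ n and distinct legs ℓ ≠ ℓ*, the probability that the walk is at v(2i, ℓ*) at time 2k+2n, given it is at v(2j, ℓ) at time 2k, equals 2·p_{ℓ*}·P(S(2n) = 2(i+j)). -/

import Mathlib

open MeasureTheory ProbabilityTheory ENNReal

/-- A vertex of the spider `SP(N)`: `none` is the origin, and `some (j, r)` is the vertex
at height `r+1` on leg `j`. -/
abbrev SpiderVertex (N : ℕ) := Option (Fin N × ℕ)

/-- One-step transition probabilities of the random walk on the spider `SP(N)`. -/
noncomputable def spiderKernel {N : ℕ} (p : Fin N → ℝ) :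
    SpiderVertex N → SpiderVertex N → ℝ≥0∞
  | none, none => 0
  | none, some (j, r) => if r = 0 then ENNReal.ofReal (p j) else 0
  | some (_, r), none => if r = 0 then 1/2 else 0
  | some (j, r), some (j', r') => if j' = j ∧ (r' + 1 = r ∨ r' = r + 1) then 1/2 else 0

/-!
Conditioning on `Y (2k) = v(2j, ℓ)` and using the Markov property reduces the claim to the
`2n`-step transition probability of the spider. For that we prove a reflection formula by
induction on the number of steps, analysing the first step. Writing `Q n z` (`srwProb`) for the
probability that a simple random walk is at `z` after `n` steps, the walk started at height `a` is
at height `b` on leg `m` with probability `2 p_m Q n (a + b)`, plus `Q n (b - a) - Q n (a + b)`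
when it starts on leg `m` itself. On a different leg only the first term survives, and
`a + b = 2(i + j)`. Independence of the increments shows that `S (2n)` has law `Q (2n)`.
-/

open Set Function

lemma MeasureTheory.nullMeasurableSet_of_add_measure_compl_le {α : Type*} [MeasurableSpace α]
    {μ : Measure α} [IsFiniteMeasure μ] {s : Set α} (h : μ s + μ sᶜ ≤ μ univ) :
    NullMeasurableSet s μ := by
  set t := toMeasurable μ s
  set c := toMeasurable μ sᶜ
  have hunion : t ∪ c = univ :=
    univ_subset_iff.1 <| (union_compl_self s).symm.subset.trans <|
      union_subset_union (subset_toMeasurable μ s) (subset_toMeasurable μ sᶜ)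
  have hinter : μ (t ∩ c) = 0 := by
    have := measure_union_add_inter (μ := μ) t (measurableSet_toMeasurable μ sᶜ)
    rw [hunion, measure_toMeasurable, measure_toMeasurable] at this
    refine le_antisymm ?_ bot_le
    exact ENNReal.le_of_add_le_add_left (measure_ne_top μ univ) (by rw [this, add_zero]; exact h)
  refine (measurableSet_toMeasurable μ s).nullMeasurableSet.congr <| ae_eq_set.2
    ⟨measure_mono_null
      (show t \ s ⊆ t ∩ c from fun x hx => ⟨hx.1, subset_toMeasurable μ sᶜ hx.2⟩) hinter, ?_⟩
  rw [sdiff_eq_empty.2 (subset_toMeasurable μ s), measure_empty]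

lemma ENNReal.toReal_inv_two_mul_add {a b : ℝ≥0∞} (ha : a ≠ ⊤) (hb : b ≠ ⊤) :
    (2⁻¹ * a + 2⁻¹ * b).toReal = (a.toReal + b.toReal) / 2 := by
  rw [← mul_add, ENNReal.toReal_mul, ENNReal.toReal_add ha hb]
  simp [div_eq_inv_mul]

section KernelPow

variable {V : Type*} [DecidableEq V] (K : V → V → ℝ≥0∞)

noncomputable def kernelPow : ℕ → V → V → ℝ≥0∞
  | 0, u, w => if u = w then 1 else 0
  | n + 1, u, w => ∑' v, K u v * kernelPow n v w

variable {K}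

lemma kernelPow_zero (u w : V) : kernelPow K 0 u w = if u = w then 1 else 0 := rfl

lemma kernelPow_succ (n : ℕ) (u w : V) :
    kernelPow K (n + 1) u w = ∑' v, K u v * kernelPow K n v w := rfl

lemma tsum_kernelPow (hK : ∀ u, ∑' v, K u v = 1) (n : ℕ) (u : V) :
    ∑' w, kernelPow K n u w = 1 := by
  induction n generalizing u with
  | zero => simp [kernelPow_zero]
  | succ n ih =>
    simp_rw [kernelPow_succ]
    rw [ENNReal.tsum_comm]
    simp_rw [ENNReal.tsum_mul_left, ih, mul_one, hK]

lemma kernelPow_ne_top (hK : ∀ u, ∑' v, K u v = 1) (n : ℕ) (u w : V) :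
    kernelPow K n u w ≠ ⊤ :=
  ne_top_of_le_ne_top ENNReal.one_ne_top <| tsum_kernelPow hK n u ▸ ENNReal.le_tsum w

end KernelPow

section MarkovChain

variable {V Ω : Type*}

def pathCylinder (Y : ℕ → Ω → V) (h : ℕ → V) (n : ℕ) : Set Ω := {ω | ∀ i ≤ n, Y i ω = h i}

def IsMarkovChain [MeasurableSpace Ω] (μ : Measure Ω) (K : V → V → ℝ≥0∞) (Y : ℕ → Ω → V) : Prop :=
  ∀ n h v, μ (pathCylinder Y h n) ≠ 0 → μ[|pathCylinder Y h n] {ω | Y (n + 1) ω = v} = K (h n) v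

lemma pathCylinder_succ (Y : ℕ → Ω → V) (h : ℕ → V) (n : ℕ) :
    pathCylinder Y h (n + 1) = pathCylinder Y h n ∩ {ω | Y (n + 1) ω = h (n + 1)} := by
  ext ω
  simp only [pathCylinder, mem_inter_iff, mem_ofPred_eq]
  refine ⟨fun H => ⟨fun i hi => H i (by omega), H _ le_rfl⟩, fun ⟨H, H'⟩ i hi => ?_⟩
  rcases Nat.lt_or_eq_of_le hi with hi | rfl
  exacts [H i (by omega), H']

lemma setOf_eq_iUnion_pathCylinder (Y : ℕ → Ω → V) (m : ℕ) (v : V) :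
    {ω | Y m ω = v}
      = ⋃ g : Fin m → V, pathCylinder Y (fun t => if ht : t < m then g ⟨t, ht⟩ else v) m := by
  ext ω
  simp only [mem_ofPred_eq, mem_iUnion, pathCylinder]
  refine ⟨fun hω => ⟨fun t => Y t ω, fun i hi => ?_⟩, fun ⟨g, hg⟩ => by simpa using hg m le_rfl⟩
  split_ifs with hlt
  · rfl
  · rw [Nat.le_antisymm hi (not_lt.1 hlt), hω]

lemma pairwise_disjoint_pathCylinder (Y : ℕ → Ω → V) (m : ℕ) (v : V) :
    Pairwise (Disjoint on fun g : Fin m → V =>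
      pathCylinder Y (fun t => if ht : t < m then g ⟨t, ht⟩ else v) m) := by
  refine fun g g' hne => Set.disjoint_left.2 fun ω hω hω' => hne (funext fun t => ?_)
  simpa [t.2] using (hω t t.2.le).symm.trans (hω' t t.2.le)

variable [MeasurableSpace Ω] [Countable V] {K : V → V → ℝ≥0∞} {μ : Measure Ω}
  [IsProbabilityMeasure μ] {Y : ℕ → Ω → V} {x₀ : V}

lemma IsMarkovChain.measure_pathCylinder_inter (hY : IsMarkovChain μ K Y)
    (hK : ∀ u, ∑' v, K u v = 1) (h : ℕ → V) (n : ℕ) (v : V) :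
    μ (pathCylinder Y h n ∩ {ω | Y (n + 1) ω = v}) = μ (pathCylinder Y h n) * K (h n) v := by
  set C := pathCylinder Y h n
  by_cases hC : μ C = 0
  · rw [hC, zero_mul]
    exact measure_mono_null inter_subset_left hC
  have hle : ∀ w, μ (C ∩ {ω | Y (n + 1) ω = w}) ≤ μ C * K (h n) w := fun w => by
    have := hY n h w hC
    rw [ProbabilityTheory.cond, Measure.smul_apply, smul_eq_mul] at this
    calc μ (C ∩ {ω | Y (n + 1) ω = w})
        ≤ μ.restrict C {ω | Y (n + 1) ω = w} := inter_comm C _ ▸ Measure.le_restrict_apply _ _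
      _ = μ C * K (h n) w := by
        rw [← this, ← mul_assoc, ENNReal.mul_inv_cancel hC (measure_ne_top μ C), one_mul]
  have htotal : ∑' w, μ C * K (h n) w = μ C := by rw [ENNReal.tsum_mul_left, hK, mul_one]
  -- The bounds `hle` cannot all be strict: summed over `w`, both sides give at least `μ C`.
  refine le_antisymm (hle v) (not_lt.1 fun hlt => ?_)
  have hcover : μ C ≤ ∑' w, μ (C ∩ {ω | Y (n + 1) ω = w}) :=
    (measure_mono (t := ⋃ w, C ∩ {ω | Y (n + 1) ω = w})
      fun ω hω => mem_iUnion.2 ⟨Y (n + 1) ω, hω, rfl⟩).trans (measure_iUnion_le _)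
  have hfin : ∑' w, μ (C ∩ {ω | Y (n + 1) ω = w}) ≠ ⊤ :=
    ne_top_of_le_ne_top (by rw [htotal]; exact measure_ne_top μ C) (ENNReal.tsum_le_tsum hle)
  exact (ENNReal.tsum_lt_tsum hfin hle hlt).not_ge (htotal.symm ▸ hcover)

/-- `Y` is not assumed measurable; this bound is what makes the path events null-measurable. -/
lemma IsMarkovChain.measure_pathCylinder_add_measure_compl_le (hY : IsMarkovChain μ K Y)
    (hK : ∀ u, ∑' v, K u v = 1) (hY0 : ∀ ω, Y 0 ω = x₀) (n : ℕ) (h : ℕ → V) :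
    μ (pathCylinder Y h n) + μ (pathCylinder Y h n)ᶜ ≤ 1 := by
  classical
  induction n with
  | zero =>
    have : pathCylinder Y h 0 = {_ω | x₀ = h 0} := by ext; simp [pathCylinder, hY0]
    rw [this, prob_add_prob_compl (MeasurableSet.const _)]
  | succ n ih =>
    set C := pathCylinder Y h n
    let E := fun v => C ∩ {ω | Y (n + 1) ω = v}
    have hsub : (pathCylinder Y h (n + 1))ᶜ ⊆ Cᶜ ∪ ⋃ v, if v = h (n + 1) then ∅ else E v := by
      intro ω hω
      by_cases hωC : ω ∈ C
      · refine Or.inr (mem_iUnion.2 ⟨Y (n + 1) ω, ?_⟩)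
        have hne : Y (n + 1) ω ≠ h (n + 1) := fun he =>
          hω (pathCylinder_succ Y h n ▸ ⟨hωC, he⟩)
        simpa [hne, E] using hωC
      · exact Or.inl hωC
    have hsum : μ (E (h (n + 1))) + ∑' v, μ (if v = h (n + 1) then ∅ else E v) = μ C := by
      have hite : ∀ v, μ (if v = h (n + 1) then ∅ else E v)
          = if v = h (n + 1) then 0 else μ (E v) := fun v => by split_ifs <;> simp
      rw [tsum_congr hite, ← ENNReal.tsum_eq_add_tsum_ite (f := fun v => μ (E v))]
      rw [tsum_congr fun v => hY.measure_pathCylinder_inter hK h n v, ENNReal.tsum_mul_left, hK,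
        mul_one]
    calc μ (pathCylinder Y h (n + 1)) + μ (pathCylinder Y h (n + 1))ᶜ
        ≤ μ (E (h (n + 1))) + (μ Cᶜ + ∑' v, μ (if v = h (n + 1) then ∅ else E v)) := by
          refine add_le_add (by rw [pathCylinder_succ]) ?_
          exact (measure_mono hsub).trans <| (measure_union_le _ _).trans <|
            add_le_add le_rfl (measure_iUnion_le _)
      _ = μ C + μ Cᶜ := by rw [← hsum]; ring
      _ ≤ 1 := ih

lemma IsMarkovChain.nullMeasurableSet_pathCylinder (hY : IsMarkovChain μ K Y)
    (hK : ∀ u, ∑' v, K u v = 1) (hY0 : ∀ ω, Y 0 ω = x₀) (h : ℕ → V) (n : ℕ) :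
    NullMeasurableSet (pathCylinder Y h n) μ :=
  nullMeasurableSet_of_add_measure_compl_le <| by
    simpa using hY.measure_pathCylinder_add_measure_compl_le hK hY0 n h

lemma IsMarkovChain.nullMeasurableSet_setOf_eq (hY : IsMarkovChain μ K Y)
    (hK : ∀ u, ∑' v, K u v = 1) (hY0 : ∀ ω, Y 0 ω = x₀) (m : ℕ) (v : V) :
    NullMeasurableSet {ω | Y m ω = v} μ := by
  rw [setOf_eq_iUnion_pathCylinder]
  exact .iUnion fun g => hY.nullMeasurableSet_pathCylinder hK hY0 _ m

variable [DecidableEq V]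

lemma IsMarkovChain.measure_pathCylinder_inter_eq_mul_kernelPow (hY : IsMarkovChain μ K Y)
    (hK : ∀ u, ∑' v, K u v = 1) (hY0 : ∀ ω, Y 0 ω = x₀) (s : ℕ) (h : ℕ → V) (n : ℕ) (w : V) :
    μ (pathCylinder Y h n ∩ {ω | Y (n + s) ω = w})
      = μ (pathCylinder Y h n) * kernelPow K s (h n) w := by
  induction s generalizing h n with
  | zero =>
    by_cases hw : h n = w
    · rw [kernelPow_zero, if_pos hw, mul_one, inter_eq_left.2 fun ω hω => (hω n le_rfl).trans hw]
    · rw [kernelPow_zero, if_neg hw, mul_zero]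
      exact measure_mono_null (fun ω hω => hw ((hω.1 n le_rfl).symm.trans hω.2)) measure_empty
  | succ s ih =>
    have hcyl : ∀ v, pathCylinder Y (update h (n + 1) v) n = pathCylinder Y h n := fun v => by
      ext ω; exact forall₂_congr fun i hi => by rw [update_of_ne (by omega)]
    have hsplit : pathCylinder Y h n ∩ {ω | Y (n + (s + 1)) ω = w}
        = ⋃ v, pathCylinder Y (update h (n + 1) v) (n + 1) ∩ {ω | Y (n + 1 + s) ω = w} := by
      simp_rw [pathCylinder_succ, hcyl, ← iUnion_inter, ← inter_iUnion, update_self,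
        ← add_assoc, add_right_comm n 1 s]
      rw [show ⋃ v, {ω | Y (n + 1) ω = v} = univ from iUnion_eq_univ_iff.2 fun ω => ⟨_, rfl⟩,
        inter_univ]
    rw [hsplit, measure_iUnion₀]
    · simp_rw [ih, pathCylinder_succ, hcyl, update_self,
        hY.measure_pathCylinder_inter hK, mul_assoc, ENNReal.tsum_mul_left, kernelPow_succ]
    · refine fun v v' hne => Disjoint.aedisjoint <| Set.disjoint_left.2 fun ω hω hω' => hne ?_
      simpa using (hω.1 (n + 1) le_rfl).symm.trans (hω'.1 (n + 1) le_rfl)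
    · exact fun v => (hY.nullMeasurableSet_pathCylinder hK hY0 _ _).inter
        (hY.nullMeasurableSet_setOf_eq hK hY0 _ _)

theorem IsMarkovChain.cond_eq_kernelPow (hY : IsMarkovChain μ K Y)
    (hK : ∀ u, ∑' v, K u v = 1) (hY0 : ∀ ω, Y 0 ω = x₀) (m s : ℕ) (v w : V)
    (hv : μ {ω | Y m ω = v} ≠ 0) :
    μ[|{ω | Y m ω = v}] {ω | Y (m + s) ω = w} = kernelPow K s v w := by
  have hdisj := pairwise_disjoint_pathCylinder Y m v
  have hnull := fun g : Fin m → V => hY.nullMeasurableSet_pathCylinder hK hY0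
    (fun t => if ht : t < m then g ⟨t, ht⟩ else v) m
  have hmeas : μ {ω | Y m ω = v} * kernelPow K s v w
      = μ ({ω | Y m ω = v} ∩ {ω | Y (m + s) ω = w}) := by
    rw [setOf_eq_iUnion_pathCylinder, iUnion_inter,
      measure_iUnion₀
        (hdisj.mono fun _ _ h => (h.mono inter_subset_left inter_subset_left).aedisjoint)
        fun g => (hnull g).inter (hY.nullMeasurableSet_setOf_eq hK hY0 _ _),
      measure_iUnion₀ (hdisj.mono fun _ _ h => h.aedisjoint) hnull, ← ENNReal.tsum_mul_right]
    refine tsum_congr fun g => ?_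
    rw [hY.measure_pathCylinder_inter_eq_mul_kernelPow hK hY0]
    simp
  rw [ProbabilityTheory.cond, Measure.smul_apply, smul_eq_mul,
    Measure.restrict_apply₀' (hY.nullMeasurableSet_setOf_eq hK hY0 m v), inter_comm, ← hmeas,
    ← mul_assoc, ENNReal.inv_mul_cancel hv (measure_ne_top _ _), one_mul]

end MarkovChain

noncomputable def srwProb : ℕ → ℤ → ℝ
  | 0, z => if z = 0 then 1 else 0
  | n + 1, z => (srwProb n (z - 1) + srwProb n (z + 1)) / 2

section RandomWalk

variable {Ω : Type*} [MeasurableSpace Ω] {μ : Measure Ω} [IsProbabilityMeasure μ]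
  {X : ℕ → Ω → ℤ}

lemma measure_compl_setOf_eq_one_or_eq_neg_one (hmeas : ∀ i, Measurable (X i))
    (h1 : ∀ i, μ {ω | X i ω = 1} = 1/2) (h2 : ∀ i, μ {ω | X i ω = -1} = 1/2) (i : ℕ) :
    μ {ω | X i ω = 1 ∨ X i ω = -1}ᶜ = 0 := by
  have hm1 : MeasurableSet {ω | X i ω = 1} := hmeas i (measurableSet_singleton 1)
  have hm2 : MeasurableSet {ω | X i ω = -1} := hmeas i (measurableSet_singleton (-1))
  have hdisj : Disjoint {ω | X i ω = 1} {ω | X i ω = -1} :=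
    Set.disjoint_left.2 fun ω h h' => by simp_all
  rw [ofPred_or, prob_compl_eq_zero_iff (hm1.union hm2), measure_union hdisj hm2, h1, h2,
    ENNReal.add_halves]

theorem toReal_measure_sum_range_eq_srwProb (hmeas : ∀ i, Measurable (X i))
    (hindep : iIndepFun X μ)
    (h1 : ∀ i, μ {ω | X i ω = 1} = 1/2) (h2 : ∀ i, μ {ω | X i ω = -1} = 1/2) (m : ℕ) (z : ℤ) :
    (μ {ω | ∑ i ∈ Finset.range m, X i ω = z}).toReal = srwProb m z := by
  induction m generalizing z with
  | zero => by_cases hz : z = 0 <;> simp [srwProb, hz, eq_comm]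
  | succ m ih =>
    have hind : IndepFun (fun ω => ∑ i ∈ Finset.range m, X i ω) (X m) μ := by
      simpa [Finset.sum_fn] using hindep.indepFun_sum_range_succ hmeas m
    have hprod : ∀ a b : ℤ, μ ({ω | ∑ i ∈ Finset.range m, X i ω = a} ∩ {ω | X m ω = b})
        = μ {ω | ∑ i ∈ Finset.range m, X i ω = a} * μ {ω | X m ω = b} := fun a b =>
      hind.measure_inter_preimage_eq_mul _ _ (measurableSet_singleton a) (measurableSet_singleton b)
    have hsplit : μ {ω | ∑ i ∈ Finset.range (m + 1), X i ω = z}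
        = μ ({ω | ∑ i ∈ Finset.range m, X i ω = z - 1} ∩ {ω | X m ω = 1})
          + μ ({ω | ∑ i ∈ Finset.range m, X i ω = z + 1} ∩ {ω | X m ω = -1}) := by
      rw [← measure_inter_conull (measure_compl_setOf_eq_one_or_eq_neg_one hmeas h1 h2 m),
        ← measure_union]
      · congr 1
        ext ω
        simp only [Finset.sum_range_succ, mem_inter_iff, mem_union, mem_ofPred_eq]
        omega
      · exact Set.disjoint_left.2 fun ω h h' => by simp_all
      · exact ((Finset.measurable_sum _ fun i _ => hmeas i) (measurableSet_singleton _)).inter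
          (hmeas m (measurableSet_singleton _))
    rw [hsplit, hprod, hprod, h1, h2, ENNReal.toReal_add (by finiteness) (by finiteness)]
    simp only [one_div, toReal_mul, ih, toReal_inv, toReal_ofNat, srwProb]
    ring

end RandomWalk

section SpiderKernel

variable {N : ℕ} {p : Fin N → ℝ}

lemma tsum_spiderKernel_none_mul (f : SpiderVertex N → ℝ≥0∞) :
    ∑' v, spiderKernel p none v * f v = ∑ j, ENNReal.ofReal (p j) * f (some (j, 0)) := by
  rw [tsum_eq_sum (s := Finset.univ.image fun j => some (j, 0)), Finset.sum_image]
  · exact Finset.sum_congr rfl fun j _ => by simp [spiderKernel]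
  · intro j _ j' _ h; simpa using h
  · rintro (_ | ⟨j, r⟩) hv
    · simp [spiderKernel]
    · simp only [Finset.mem_image, Finset.mem_univ, true_and, not_exists] at hv
      simp [spiderKernel, show r ≠ 0 from fun hr => hv j (by rw [hr])]

lemma tsum_spiderKernel_zero_mul (ℓ : Fin N) (f : SpiderVertex N → ℝ≥0∞) :
    ∑' v, spiderKernel p (some (ℓ, 0)) v * f v = 2⁻¹ * f none + 2⁻¹ * f (some (ℓ, 1)) := by
  rw [tsum_eq_sum (s := {none, some (ℓ, 1)}), Finset.sum_pair (by simp)]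
  · simp [spiderKernel]
  · rintro (_ | ⟨j, r⟩) hv
    · simp at hv
    · simp only [Finset.mem_insert, Finset.mem_singleton, reduceCtorEq, Option.some.injEq,
        Prod.mk.injEq, false_or, not_and] at hv
      simp only [spiderKernel, mul_eq_zero, ite_eq_right_iff]
      left; omega

lemma tsum_spiderKernel_succ_mul (ℓ : Fin N) (x : ℕ) (f : SpiderVertex N → ℝ≥0∞) :
    ∑' v, spiderKernel p (some (ℓ, x + 1)) v * f v
      = 2⁻¹ * f (some (ℓ, x)) + 2⁻¹ * f (some (ℓ, x + 2)) := by
  rw [tsum_eq_sum (s := {some (ℓ, x), some (ℓ, x + 2)}), Finset.sum_pair (by simp)]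
  · simp [spiderKernel]
  · rintro (_ | ⟨j, r⟩) hv
    · simp [spiderKernel]
    · simp only [Finset.mem_insert, Finset.mem_singleton, Option.some.injEq,
        Prod.mk.injEq, not_or, not_and] at hv
      simp only [spiderKernel, mul_eq_zero, ite_eq_right_iff]
      left; omega

lemma tsum_spiderKernel (hp0 : ∀ j, 0 ≤ p j) (hp : ∑ j, p j = 1) (u : SpiderVertex N) :
    ∑' v, spiderKernel p u v = 1 := by
  rcases u with _ | ⟨ℓ, _ | x⟩
  · simpa [← ENNReal.ofReal_sum_of_nonneg fun j _ => hp0 j, hp]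
      using tsum_spiderKernel_none_mul (p := p) fun _ => 1
  · simpa [ENNReal.inv_two_add_inv_two] using tsum_spiderKernel_zero_mul (p := p) ℓ fun _ => 1
  · simpa [ENNReal.inv_two_add_inv_two] using tsum_spiderKernel_succ_mul (p := p) ℓ x fun _ => 1

def SpiderVertex.height : SpiderVertex N → ℕ
  | none => 0
  | some (_, r) => r + 1

open SpiderVertex in
theorem toReal_kernelPow_spiderKernel (hp0 : ∀ j, 0 ≤ p j) (hp : ∑ j, p j = 1)
    (m : Fin N) (y : ℕ) (n : ℕ) (u : SpiderVertex N) :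
    (kernelPow (spiderKernel p) n u (some (m, y))).toReal
      = (if u.map Prod.fst = some m
          then srwProb n (y + 1 - height u) - srwProb n (height u + y + 1) else 0)
        + 2 * p m * srwProb n (height u + y + 1) := by
  have hfin := kernelPow_ne_top (tsum_spiderKernel hp0 hp)
  induction n generalizing u with
  | zero =>
    rcases u with _ | ⟨ℓ, x⟩
    · have hy : (y + 1 : ℤ) ≠ 0 := by omega
      simp [kernelPow_zero, srwProb, height, hy]
    · have hxy : (x + 1 + y + 1 : ℤ) ≠ 0 := by omega
      simp only [kernelPow_zero, srwProb, height, Option.map_some, Option.some.injEq,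
        Prod.mk.injEq, Nat.cast_add, Nat.cast_one, hxy, if_false, sub_zero, sub_eq_zero]
      by_cases hℓ : ℓ = m <;> by_cases hx : x = y <;> simp [hℓ, hx, @eq_comm _ y x]
  | succ n ih =>
    rcases u with _ | ⟨ℓ, _ | x⟩
    · rw [kernelPow_succ, tsum_spiderKernel_none_mul,
        ENNReal.toReal_sum fun j _ => ENNReal.mul_ne_top ENNReal.ofReal_ne_top (hfin _ _ _)]
      simp only [ENNReal.toReal_mul, ENNReal.toReal_ofReal (hp0 _), ih]
      simp only [Option.map_none, Option.map_some, reduceCtorEq, if_false, Option.some.injEq,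
        height, mul_add, mul_ite, mul_zero, Finset.sum_add_distrib, Finset.sum_ite_eq',
        Finset.mem_univ, if_true, ← Finset.sum_mul, hp, one_mul, srwProb]
      push_cast
      ring_nf
    · rw [kernelPow_succ, tsum_spiderKernel_zero_mul,
        ENNReal.toReal_inv_two_mul_add (hfin _ _ _) (hfin _ _ _), ih, ih]
      simp only [Option.map_none, Option.map_some, reduceCtorEq, if_false, Option.some.injEq,
        height, srwProb]
      push_cast
      split_ifs <;> ring_nf
    · rw [kernelPow_succ, tsum_spiderKernel_succ_mul,
        ENNReal.toReal_inv_two_mul_add (hfin _ _ _) (hfin _ _ _), ih, ih]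
      simp only [Option.map_some, Option.some.injEq, height, srwProb]
      push_cast
      split_ifs <;> ring_nf

theorem toReal_kernelPow_spiderKernel_of_ne (hp0 : ∀ j, 0 ≤ p j) (hp : ∑ j, p j = 1)
    {ℓ m : Fin N} (hℓ : ℓ ≠ m) (x y n : ℕ) :
    (kernelPow (spiderKernel p) n (some (ℓ, x)) (some (m, y))).toReal
      = 2 * p m * srwProb n (x + y + 2) := by
  rw [toReal_kernelPow_spiderKernel hp0 hp]
  simp only [Option.map_some, Option.some.injEq, hℓ, if_false, zero_add, SpiderVertex.height]
  push_cast
  ring_nf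

end SpiderKernel

theorem spider_transition_different_legs_general
    {Ω Ω' : Type*} [MeasurableSpace Ω] [MeasurableSpace Ω']
    (μ : Measure Ω) [IsProbabilityMeasure μ]
    (μ' : Measure Ω') [IsProbabilityMeasure μ']
    (N : ℕ) (p : Fin N → ℝ) (hp0 : ∀ j, 0 ≤ p j) (hp : ∑ j, p j = 1)
    (Y : ℕ → Ω → SpiderVertex N)
    (hY0 : ∀ ω, Y 0 ω = none)
    (hMarkov : ∀ (n : ℕ) (h : ℕ → SpiderVertex N) (v : SpiderVertex N),
      μ {ω | ∀ i ≤ n, Y i ω = h i} ≠ 0 →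
      (μ[|{ω | ∀ i ≤ n, Y i ω = h i}]) {ω | Y (n+1) ω = v} = spiderKernel p (h n) v)
    (X : ℕ → Ω' → ℤ) (hmeas : ∀ i, Measurable (X i))
    (hindep : iIndepFun X μ')
    (h1 : ∀ i, μ' {ω | X i ω = 1} = 1/2) (h2 : ∀ i, μ' {ω | X i ω = -1} = 1/2)
    (S : ℕ → Ω' → ℤ) (hS : ∀ n ω, S n ω = ∑ i ∈ Finset.range n, X i ω)
    (n k i j : ℕ) (hi : 1 ≤ i) (hj : 1 ≤ j)
    (ℓ ℓstar : Fin N) (hℓ : ℓ ≠ ℓstar)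
    (hB : μ {ω | Y (2*k) ω = some (ℓ, 2*j - 1)} ≠ 0) :
    ((μ[|{ω | Y (2*k) ω = some (ℓ, 2*j - 1)}])
        {ω | Y (2*k+2*n) ω = some (ℓstar, 2*i - 1)}).toReal
      = 2 * p ℓstar * (μ' {ω | S (2*n) ω = 2*(i+j)}).toReal := by
  rw [IsMarkovChain.cond_eq_kernelPow hMarkov (tsum_spiderKernel hp0 hp) hY0 _ _ _ _ hB,
    toReal_kernelPow_spiderKernel_of_ne hp0 hp hℓ]
  simp only [hS]
  rw [toReal_measure_sum_range_eq_srwProb hmeas hindep h1 h2]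
  congr 2
  omega

/-- Transition probability of the spider walk between distinct legs `ℓ ≠ ℓ*`:
`P(S_{2k+2n} = v(2i,ℓ*) | S_{2k} = v(2j,ℓ)) = 2 p_{ℓ*} P(S(2n) = 2(i+j))`, where `S` is
a simple symmetric random walk on `ℤ`. -/
theorem spider_transition_different_legs
    {Ω Ω' : Type*} [MeasurableSpace Ω] [MeasurableSpace Ω']
    (μ : Measure Ω) [IsProbabilityMeasure μ]
    (μ' : Measure Ω') [IsProbabilityMeasure μ']
    (N : ℕ) (hN : 1 ≤ N) (p : Fin N → ℝ) (hp0 : ∀ j, 0 ≤ p j) (hp : ∑ j, p j = 1)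
    (Y : ℕ → Ω → SpiderVertex N)
    (hY0 : ∀ ω, Y 0 ω = none)
    (hMarkov : ∀ (n : ℕ) (h : ℕ → SpiderVertex N) (v : SpiderVertex N),
      μ {ω | ∀ i ≤ n, Y i ω = h i} ≠ 0 →
      (μ[|{ω | ∀ i ≤ n, Y i ω = h i}]) {ω | Y (n+1) ω = v} = spiderKernel p (h n) v)
    (X : ℕ → Ω' → ℤ) (hmeas : ∀ i, Measurable (X i))
    (hindep : iIndepFun X μ')
    (h1 : ∀ i, μ' {ω | X i ω = 1} = 1/2) (h2 : ∀ i, μ' {ω | X i ω = -1} = 1/2)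
    (S : ℕ → Ω' → ℤ) (hS : ∀ n ω, S n ω = ∑ i ∈ Finset.range n, X i ω)
    (n k i j : ℕ) (hn : 1 ≤ n) (hi : 1 ≤ i) (hj : 1 ≤ j) (hij : i + j ≤ n)
    (ℓ ℓstar : Fin N) (hℓ : ℓ ≠ ℓstar)
    (hB : μ {ω | Y (2*k) ω = some (ℓ, 2*j - 1)} ≠ 0) :
    ((μ[|{ω | Y (2*k) ω = some (ℓ, 2*j - 1)}])
        {ω | Y (2*k+2*n) ω = some (ℓstar, 2*i - 1)}).toReal
      = 2 * p ℓstar * (μ' {ω | S (2*n) ω = 2*(i+j)}).toReal :=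
  spider_transition_different_legs_general μ μ' N p hp0 hp Y hY0 hMarkov X hmeas hindep h1 h2 S hS n
    k i j hi hj ℓ ℓstar hℓ hB
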